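/- Let (V, e) be an order unit space. If u ∈ V⁺ has the order unit property in V and ‖u‖ ≤ 1, then u is an extreme point of the convex set V₁⁺ = {w ∈ V⁺ : ‖w‖ ≤ 1}. -/

import Mathlib

section OrderUnit

variable {V : Type*} [NormedAddCommGroup V] [NormedSpace ℝ V] [PartialOrder V]

/-- `x` is ∞-orthogonal to `y`: `‖x + k y‖ = max {‖x‖, ‖k y‖}` for all `k ∈ ℝ`. -/
def PerpInf (x y : V) : Prop :=
  ∀ k : ℝ, ‖x + k • y‖ = max ‖x‖ ‖k • y‖

/-- The norm of `V` is the order unit norm determined by the order unit `e`: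
for every `v` and every `λ ≥ 0`, `‖v‖ ≤ λ` iff `-λ e ≤ v ≤ λ e`. -/
def IsOrderUnitNorm (e : V) : Prop :=
  ∀ (v : V) (t : ℝ), 0 ≤ t → (‖v‖ ≤ t ↔ -(t • e) ≤ v ∧ v ≤ t • e)

/-- `u` has the order unit property: whenever `λ u + v ≥ 0` and `λ u - v ≥ 0` for some
`λ > 0`, also `‖v‖ u + v ≥ 0` and `‖v‖ u - v ≥ 0`. -/
def HasOUP (u : V) : Prop :=
  ∀ v : V, (∃ l : ℝ, 0 < l ∧ 0 ≤ l • u + v ∧ 0 ≤ l • u - v) →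
    0 ≤ ‖v‖ • u + v ∧ 0 ≤ ‖v‖ • u - v

end OrderUnit

/-! If `u = a • x + b • y` with `x, y ∈ V₁⁺`, put `d = x - y`, so that `x = u + b • d` and
`y = u - a • d` both lie in `[0, e]`. This confines `d` to an order interval of `u`, so the OUP
gives `-(s • u) ≤ d ≤ s • u` with `s = ‖d‖`. Adding `d ≤ s • u` to `s • (u + b • d) ≤ s • e`
yields `(1 + b * s) • d ≤ s • e`, and likewise `-((1 + a * s) • d) ≤ s • e`. The order unit norm
then gives `s ≤ s / (1 + min a b * s)`, which forces `s = 0`. -/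
section

variable {V : Type*} [NormedAddCommGroup V] [NormedSpace ℝ V] [PartialOrder V]

theorem IsOrderUnitNorm.le_of_norm_le_one {e v : V} (hnorm : IsOrderUnitNorm e) (hv : ‖v‖ ≤ 1) :
    v ≤ e := by
  simpa using ((hnorm v 1 zero_le_one).mp hv).2

variable [IsOrderedAddMonoid V]

theorem HasOUP.mem_Icc_norm_smul {u v : V} (hOUP : HasOUP u) {l : ℝ} (hl : 0 < l)
    (hv : v ∈ Set.Icc (-(l • u)) (l • u)) : v ∈ Set.Icc (-(‖v‖ • u)) (‖v‖ • u) := by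
  obtain ⟨h₁, h₂⟩ := hOUP v ⟨l, hl, neg_le_iff_add_nonneg'.1 hv.1, sub_nonneg.2 hv.2⟩
  exact ⟨neg_le_iff_add_nonneg'.2 h₁, sub_nonneg.1 h₂⟩

variable [PosSMulMono ℝ V]

theorem le_smul_of_le_smul_of_add_smul_le {u v e : V} {s b : ℝ} (hs : 0 ≤ s) (hb : 0 ≤ b)
    (hvu : v ≤ s • u) (hve : u + b • v ≤ e) : v ≤ (s / (1 + b * s)) • e := by
  have key : (1 + b * s) • v ≤ s • e :=
    calc (1 + b * s) • v = s • (u + b • v) + v - s • u := by module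
      _ ≤ s • e + s • u - s • u := by gcongr
      _ = s • e := add_sub_cancel_right _ _
  rwa [div_eq_inv_mul, mul_smul, le_inv_smul_iff_of_pos (by positivity)]

theorem HasOUP.eq_zero_of_add_smul_mem_Icc {u d e : V} {a b : ℝ} (hOUP : HasOUP u)
    (hnorm : IsOrderUnitNorm e) (he : 0 ≤ e) (hu : 0 ≤ u) (ha : 0 < a) (hb : 0 < b)
    (hx : u + b • d ∈ Set.Icc 0 e) (hy : u - a • d ∈ Set.Icc 0 e) : d = 0 := by
  have hbound : d ∈ Set.Icc (-((a⁻¹ + b⁻¹) • u)) ((a⁻¹ + b⁻¹) • u) := by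
    constructor
    · rw [neg_le_iff_add_nonneg']
      convert add_nonneg (smul_nonneg (inv_nonneg.2 ha.le) hu)
        (smul_nonneg (inv_nonneg.2 hb.le) hx.1) using 1
      match_scalars <;> field_simp
    · rw [← sub_nonneg]
      convert add_nonneg (smul_nonneg (inv_nonneg.2 ha.le) hy.1)
        (smul_nonneg (inv_nonneg.2 hb.le) hu) using 1
      match_scalars <;> field_simp
  obtain ⟨hlow, hup⟩ := hOUP.mem_Icc_norm_smul (by positivity) hbound
  set s := ‖d‖
  have hs0 : 0 ≤ s := norm_nonneg d
  set k := min a b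
  have hk : 0 < k := lt_min ha hb
  have h₁ : d ≤ (s / (1 + k * s)) • e := by
    refine (le_smul_of_le_smul_of_add_smul_le hs0 hb.le hup hx.2).trans ?_
    gcongr
    exact min_le_right a b
  have h₂ : -d ≤ (s / (1 + k * s)) • e := by
    have hy' : u + a • -d ≤ e := by rw [smul_neg, ← sub_eq_add_neg]; exact hy.2
    refine (le_smul_of_le_smul_of_add_smul_le hs0 ha.le (neg_le.1 hlow) hy').trans ?_
    gcongr
    exact min_le_left a b
  have hle : s ≤ s / (1 + k * s) := (hnorm d _ (by positivity)).2 ⟨neg_le.1 h₂, h₁⟩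
  by_contra hd
  have hspos : 0 < s := norm_pos_iff.2 hd
  exact hle.not_gt (div_lt_self hspos (by nlinarith))

end

theorem hasOUP_mem_extremePoints {V : Type*} [NormedAddCommGroup V] [NormedSpace ℝ V]
    [PartialOrder V]
    (hadd : ∀ a b c : V, b ≤ c → a + b ≤ a + c)
    (hsmul : ∀ (t : ℝ) (v : V), 0 ≤ t → 0 ≤ v → 0 ≤ t • v)
    (e : V) (he : 0 ≤ e) (hnorm : IsOrderUnitNorm e)
    (u : V) (hu : 0 ≤ u) (hOUP : HasOUP u) (hnu : ‖u‖ ≤ 1) :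
    u ∈ Set.extremePoints ℝ {w : V | 0 ≤ w ∧ ‖w‖ ≤ 1} := by
  have : IsOrderedAddMonoid V :=
    { add_le_add_left := fun a b h c ↦ by simpa only [add_comm c] using hadd c a b h }
  have : PosSMulMono ℝ V := .of_smul_nonneg fun t ht v hv ↦ hsmul t v ht hv
  refine ⟨⟨hu, hnu⟩, ?_⟩
  rintro x ⟨hx0, hx1⟩ y ⟨hy0, hy1⟩ ⟨a, b, ha, hb, hab, rfl⟩
  have hx : a • x + b • y + b • (x - y) = x := by
    linear_combination (norm := module) hab • x
  have hy : a • x + b • y - a • (x - y) = y := by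
    linear_combination (norm := module) hab • y
  have hd : x - y = 0 := hOUP.eq_zero_of_add_smul_mem_Icc hnorm he hu ha hb
    (by rw [hx]; exact ⟨hx0, hnorm.le_of_norm_le_one hx1⟩)
    (by rw [hy]; exact ⟨hy0, hnorm.le_of_norm_le_one hy1⟩)
  rw [hd, smul_zero, add_zero] at hx
  exact hx.symm
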